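/- There is an algorithm that, given an integer k ≥ 2, a DFAO M generating a k-automatic sequence a = (a_n)_{n≥0}, and a length l ≥ 1, decides whether a avoids palindromes of length ≥ l, i.e., whether no factor of a of length ≥ l is a palindrome. -/

import Mathlib

/-- Run an encoded DFAO transition table from state `q` on a list of base-`k`
digits, least significant digit first (this is `w^R` for a most-significant-first
representation `w`). -/
def dfaoRun (trans : List (List ℕ)) : ℕ → List ℕ → ℕ
  | q, [] => q
  | q, d :: ds => dfaoRun trans ((trans.getD q []).getD d 0) ds

/-- The encoded DFAO `(trans, q0, out)` over input alphabet `Σ_k = {0,…,k-1}`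
generates the sequence `a`: for every `m` and every base-`k` representation `w`
of `m` (given least significant digit first, possibly with trailing zeros,
all digits `< k`), the output on `w` is `a m`. -/
def dfaoGenerates (k : ℕ) (trans : List (List ℕ)) (q0 : ℕ) (out : List ℕ)
    (a : ℕ → ℕ) : Prop :=
  ∀ (m : ℕ) (w : List ℕ), (∀ d ∈ w, d < k) → Nat.ofDigits k w = m →
    a m = out.getD (dfaoRun trans q0 w) 0

/-- The factor `a_i a_{i+1} ⋯ a_{i+L-1}` of the sequence `a`. -/
def factorAt (a : ℕ → ℕ) (i L : ℕ) : List ℕ :=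
  (List.range L).map fun j => a (i + j)

/-- `w` is a factor of the infinite word `a`. -/
def IsFactorOf (a : ℕ → ℕ) (w : List ℕ) : Prop :=
  ∃ i : ℕ, w = factorAt a i w.length

/-!
A palindrome of length `L + 2` at position `i` contains one of length `L` at position `i + 1`,
so a sequence avoids palindromes of length `≥ l` as soon as it avoids those of lengths `l` and
`l + 1`. For a fixed length `L`, the factor at `i` is read off by running `L` copies of the DFAO
in parallel, the `j`-th one fed the digits of `i + j` by a carry-propagating adder that reads the
digits of `i`. This product automaton has at most `stateBound trans L` states, so cutting out
loops shows that every factor of length `L` already occurs at a position below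
`k ^ stateBound trans L`, and a finite search decides the question.
-/

namespace List

variable {α σ : Type*}

theorem foldl_mem_of_forall_mem (f : σ → α → σ) {s : Finset σ} {x : σ} (hx : x ∈ s) {w : List α}
    (hs : ∀ a ∈ w, ∀ y ∈ s, f y a ∈ s) : w.foldl f x ∈ s := by
  induction w generalizing x with
  | nil => exact hx
  | cons a w ih => exact ih (hs a mem_cons_self x hx) fun b hb => hs b (mem_cons_of_mem a hb)

theorem exists_sublist_length_lt_card_foldl_eq (f : σ → α → σ) (s : Finset σ) {x : σ} (hx : x ∈ s)
    {w : List α} (hs : ∀ a ∈ w, ∀ y ∈ s, f y a ∈ s) :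
    ∃ w' : List α, w' <+ w ∧ w'.length < s.card ∧ w'.foldl f x = w.foldl f x := by
  induction hn : w.length using Nat.strong_induction_on generalizing w with
  | _ n ih =>
  by_cases hshort : w.length < s.card
  · exact ⟨w, Sublist.refl w, hshort, rfl⟩
  obtain ⟨m₁, hm₁, m₂, hm₂, hne, hloop⟩ := Finset.exists_ne_map_eq_of_card_lt_of_maps_to
    (s := Finset.range (w.length + 1)) (f := fun m => (w.take m).foldl f x)
    (by rw [Finset.card_range]; omega)
    (fun m _ => foldl_mem_of_forall_mem f hx fun a ha => hs a (take_subset m w ha))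
  wlog hlt : m₁ < m₂ generalizing m₁ m₂
  · exact this m₂ hm₂ m₁ hm₁ hne.symm hloop.symm (by omega)
  rw [Finset.mem_range] at hm₂
  have hcut : w.take m₁ ++ w.drop m₂ <+ w := by
    have h := (take_sublist_take_left (l := w) hlt.le).append_right (w.drop m₂)
    rwa [take_append_drop] at h
  obtain ⟨w', hsub, hlen, hfold⟩ := ih _ (by simp only [length_append, length_take, length_drop]; omega) (fun a ha => hs a (hcut.subset ha)) rfl
  refine ⟨w', hsub.trans hcut, hlen, hfold.trans ?_⟩
  rw [foldl_append, hloop, ← foldl_append, take_append_drop]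

theorem foldl_pointwise_apply {ι : Type*} (f : σ → α → σ) (w : List α) (g : ι → σ) (i : ι) :
    w.foldl (fun g a i => f (g i) a) g i = w.foldl f (g i) := by
  induction w generalizing g with
  | nil => rfl
  | cons a w ih => exact ih _

theorem exists_sublist_length_lt_card_pow_forall_foldl_eq {ι : Type*} [Fintype ι] [DecidableEq ι]
    (f : σ → α → σ) (s : Finset σ) {x : ι → σ} (hx : ∀ i, x i ∈ s) {w : List α}
    (hs : ∀ a ∈ w, ∀ y ∈ s, f y a ∈ s) :
    ∃ w' : List α, w' <+ w ∧ w'.length < s.card ^ Fintype.card ι ∧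
      ∀ i, w'.foldl f (x i) = w.foldl f (x i) := by
  obtain ⟨w', hsub, hlen, hfold⟩ := exists_sublist_length_lt_card_foldl_eq
    (fun g a i => f (g i) a) (Fintype.piFinset fun _ => s) (Fintype.mem_piFinset.2 hx)
    (fun a ha g hg => Fintype.mem_piFinset.2 fun i => hs a ha _ (Fintype.mem_piFinset.1 hg i))
  refine ⟨w', hsub, by simpa using hlen, fun i => ?_⟩
  simpa only [foldl_pointwise_apply] using congrFun hfold i

end List

open List Nat

section Carry

variable (k : ℕ) (δ : ℕ → ℕ → ℕ)

/-- Run on the base-`k` digits of `n` from `(q, c)`, this feeds `δ` the digits of `n + c`. -/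
def carryStep (p : ℕ × ℕ) (d : ℕ) : ℕ × ℕ :=
  (δ p.1 ((d + p.2) % k), (d + p.2) / k)

def addDigits : ℕ → List ℕ → List ℕ
  | _, [] => []
  | c, d :: w => (d + c) % k :: addDigits ((d + c) / k) w

variable {k δ}

theorem foldl_carryStep_fst (q c : ℕ) (w : List ℕ) :
    (w.foldl (carryStep k δ) (q, c)).1 = (addDigits k c w).foldl δ q := by
  induction w generalizing q c with
  | nil => rfl
  | cons d w ih => exact ih _ _

theorem ofDigits_addDigits_add_mul (q c : ℕ) (w : List ℕ) :
    ofDigits k (addDigits k c w) + (w.foldl (carryStep k δ) (q, c)).2 * k ^ w.length =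
      ofDigits k w + c := by
  induction w generalizing q c with
  | nil => simp [addDigits]
  | cons d w ih =>
    have hstep := ih (δ q ((d + c) % k)) ((d + c) / k)
    have hdiv := Nat.mod_add_div (d + c) k
    simp only [addDigits, foldl_cons, carryStep, ofDigits_cons, length_cons, pow_succ] at hstep ⊢
    linear_combination k * hstep + hdiv

theorem addDigits_lt (hk : 0 < k) (c : ℕ) (w : List ℕ) : ∀ d ∈ addDigits k c w, d < k := by
  induction w generalizing c with
  | nil => simp [addDigits]
  | cons d w ih =>
    simp only [addDigits, mem_cons, forall_eq_or_imp]
    exact ⟨Nat.mod_lt _ hk, ih _⟩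

theorem foldl_carryStep_snd_eq_zero (q c : ℕ) {w : List ℕ}
    (h : ofDigits k w + c < k ^ w.length) : (w.foldl (carryStep k δ) (q, c)).2 = 0 := by
  have hsum := ofDigits_addDigits_add_mul (k := k) (δ := δ) q c w
  by_contra hne
  have : k ^ w.length ≤ (w.foldl (carryStep k δ) (q, c)).2 * k ^ w.length :=
    Nat.le_mul_of_pos_left _ (Nat.pos_of_ne_zero hne)
  omega

theorem carryStep_snd_le {d : ℕ} (hd : d < k) (p : ℕ × ℕ) : (carryStep k δ p d).2 ≤ p.2 := by
  rw [carryStep, Nat.div_le_iff_le_mul_add_pred (by omega)]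
  have := Nat.le_mul_of_pos_left p.2 (by omega : 0 < k)
  omega

theorem foldl_carryStep_digits_append_replicate_snd (hk : 2 ≤ k) (q : ℕ) {i j L : ℕ}
    (hj : j < L) : ((digits k i ++ replicate L 0).foldl (carryStep k δ) (q, j)).2 = 0 := by
  refine foldl_carryStep_snd_eq_zero _ _ ?_
  have hi := lt_base_pow_length_digits (m := i) hk
  have hL := (Nat.lt_pow_self hk : L < k ^ L)
  rw [ofDigits_append_replicate_zero, ofDigits_digits, length_append, length_replicate, pow_add]
  nlinarith

end Carry

def dfaoStep (trans : List (List ℕ)) (q d : ℕ) : ℕ :=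
  (trans.getD q []).getD d 0

theorem dfaoRun_eq_foldl (trans : List (List ℕ)) (q : ℕ) (w : List ℕ) :
    dfaoRun trans q w = w.foldl (dfaoStep trans) q := by
  induction w generalizing q with
  | nil => rfl
  | cons d w ih => exact ih _

theorem getD_mem_insert_toFinset (l : List ℕ) (n : ℕ) : l.getD n 0 ∈ insert 0 l.toFinset := by
  rcases lt_or_ge n l.length with hn | hn
  · rw [getD_eq_getElem l 0 hn]
    exact Finset.mem_insert_of_mem (mem_toFinset.2 (getElem_mem hn))
  · rw [getD_eq_default l 0 hn]
    exact Finset.mem_insert_self 0 _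

/-- Contains every state reachable from `q0`; `0` is where `getD` lands on a missing transition. -/
def dfaoStates (trans : List (List ℕ)) (q0 : ℕ) : Finset ℕ :=
  insert q0 (insert 0 trans.flatten.toFinset)

theorem dfaoStep_mem_dfaoStates (trans : List (List ℕ)) (q0 q d : ℕ) :
    dfaoStep trans q d ∈ dfaoStates trans q0 := by
  refine Finset.mem_insert_of_mem (Finset.insert_subset_insert 0 ?_ (getD_mem_insert_toFinset _ d))
  intro x hx
  rcases lt_or_ge q trans.length with hq | hq
  · rw [getD_eq_getElem _ _ hq] at hx
    exact mem_toFinset.2 (mem_flatten_of_mem (getElem_mem hq) (mem_toFinset.1 hx))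
  · rw [getD_eq_default _ _ hq] at hx
    simp at hx

theorem card_dfaoStates_le (trans : List (List ℕ)) (q0 : ℕ) :
    (dfaoStates trans q0).card ≤ trans.flatten.length + 2 :=
  calc (dfaoStates trans q0).card ≤ trans.flatten.toFinset.card + 1 + 1 :=
        (Finset.card_insert_le _ _).trans (by gcongr; exact Finset.card_insert_le _ _)
    _ ≤ trans.flatten.length + 2 := by have := trans.flatten.toFinset_card_le; omega

def stateBound (trans : List (List ℕ)) (L : ℕ) : ℕ :=
  ((trans.flatten.length + 2) * L) ^ L

/-- The sequence computed by the DFAO; it reads `n` through its first `n` base-`k` digits, which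
suffice because `n < k ^ n`. -/
def dfaoSeq (k : ℕ) (trans : List (List ℕ)) (q0 : ℕ) (out : List ℕ) (n : ℕ) : ℕ :=
  out.getD (dfaoRun trans q0 ((range n).map fun m => n / k ^ m % k)) 0

theorem ofDigits_map_range_div_pow_mod (k n N : ℕ) :
    ofDigits k ((range N).map fun m => n / k ^ m % k) = n % k ^ N := by
  induction N with
  | zero => simp [Nat.mod_one]
  | succ N ih => simp [range_succ, ofDigits_append, ih, Nat.mod_pow_succ]

namespace dfaoGenerates

variable {k q0 : ℕ} {trans : List (List ℕ)} {out : List ℕ} {a : ℕ → ℕ}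

theorem eq_dfaoSeq (hk : 2 ≤ k) (h : dfaoGenerates k trans q0 out a) :
    a = dfaoSeq k trans q0 out := by
  funext n
  refine h n _ (by simp [Nat.mod_lt _ (by omega : 0 < k)]) ?_
  rw [ofDigits_map_range_div_pow_mod, Nat.mod_eq_of_lt (Nat.lt_pow_self hk)]

theorem apply_ofDigits_add (hk : 0 < k) (h : dfaoGenerates k trans q0 out a) {w : List ℕ} {c : ℕ}
    (hc : (w.foldl (carryStep k (dfaoStep trans)) (q0, c)).2 = 0) :
    a (ofDigits k w + c) = out.getD (w.foldl (carryStep k (dfaoStep trans)) (q0, c)).1 0 := by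
  have hsum := ofDigits_addDigits_add_mul (k := k) (δ := dfaoStep trans) q0 c w
  rw [hc, zero_mul, add_zero] at hsum
  rw [foldl_carryStep_fst, ← dfaoRun_eq_foldl]
  exact h _ _ (addDigits_lt hk c w) hsum

theorem exists_lt_factorAt_eq (hk : 2 ≤ k) (h : dfaoGenerates k trans q0 out a) (i L : ℕ) :
    ∃ i' < k ^ stateBound trans L, factorAt a i' L = factorAt a i L := by
  -- trailing zeros flush the carries of all `L` adders
  set w := digits k i ++ replicate L 0
  have hw : ∀ d ∈ w, d < k := by
    simp only [w, mem_append, mem_replicate]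
    rintro d (hd | ⟨-, rfl⟩)
    exacts [digits_lt_base hk hd, by omega]
  have hwi : ofDigits k w = i := by rw [ofDigits_append_replicate_zero, ofDigits_digits]
  obtain ⟨w', hsub, hlen, hrun⟩ := exists_sublist_length_lt_card_pow_forall_foldl_eq
    (carryStep k (dfaoStep trans)) (dfaoStates trans q0 ×ˢ Finset.range L)
    (x := fun j : Fin L => (q0, (j : ℕ)))
    (fun j => Finset.mem_product.2 ⟨Finset.mem_insert_self _ _, Finset.mem_range.2 j.2⟩)
    (fun d hd p hp => Finset.mem_product.2 ⟨dfaoStep_mem_dfaoStates _ _ _ _,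
      Finset.mem_range.2 ((carryStep_snd_le (hw d hd) p).trans_lt
        (Finset.mem_range.1 (Finset.mem_product.1 hp).2))⟩)
  refine ⟨ofDigits k w', ?_, map_congr_left fun j hj => ?_⟩
  · calc ofDigits k w' < k ^ w'.length :=
          ofDigits_lt_base_pow_length hk fun d hd => hw d (hsub.subset hd)
      _ ≤ k ^ stateBound trans L := by
          refine Nat.pow_le_pow_right (by omega) (hlen.le.trans ?_)
          rw [Finset.card_product, Finset.card_range, Fintype.card_fin, stateBound]
          gcongr
          exact card_dfaoStates_le trans q0
  · have hj : j < L := mem_range.1 hj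
    have hflush : (w.foldl (carryStep k (dfaoStep trans)) (q0, j)).2 = 0 :=
      foldl_carryStep_digits_append_replicate_snd hk q0 hj
    have hrun_j := hrun ⟨j, hj⟩
    have hflush' : (w'.foldl (carryStep k (dfaoStep trans)) (q0, j)).2 = 0 := by
      rw [hrun_j]; exact hflush
    rw [h.apply_ofDigits_add (by omega) hflush', hrun_j, ← hwi,
      h.apply_ofDigits_add (by omega) hflush]

end dfaoGenerates

def HasNoPalindromeOfLength (a : ℕ → ℕ) (L : ℕ) : Prop :=
  ∀ i, (factorAt a i L).reverse ≠ factorAt a i L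

section Palindromes

variable {a : ℕ → ℕ}

theorem length_factorAt (a : ℕ → ℕ) (i L : ℕ) : (factorAt a i L).length = L := by
  simp [factorAt]

theorem factorAt_succ (a : ℕ → ℕ) (i L : ℕ) :
    factorAt a i (L + 1) = a i :: factorAt a (i + 1) L := by
  simp [factorAt, range_succ_eq_map, Nat.add_assoc, Nat.add_comm 1]

theorem factorAt_succ' (a : ℕ → ℕ) (i L : ℕ) :
    factorAt a i (L + 1) = factorAt a i L ++ [a (i + L)] := by
  simp [factorAt, range_succ]

theorem HasNoPalindromeOfLength.add_two {L : ℕ} (h : HasNoPalindromeOfLength a L) :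
    HasNoPalindromeOfLength a (L + 2) := by
  intro i hi
  rw [factorAt_succ, factorAt_succ'] at hi
  simp only [reverse_cons, reverse_append, reverse_nil, nil_append, cons_append, cons.injEq,
    append_singleton_inj] at hi
  exact h (i + 1) hi.2.1

theorem hasNoPalindromeOfLength_of_le {l L : ℕ} (hl : l ≤ L) (h₀ : HasNoPalindromeOfLength a l)
    (h₁ : HasNoPalindromeOfLength a (l + 1)) : HasNoPalindromeOfLength a L := by
  induction L using Nat.strong_induction_on with
  | _ L ih =>
    rcases (by omega : L = l ∨ L = l + 1 ∨ l + 2 ≤ L) with rfl | rfl | hL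
    · exact h₀
    · exact h₁
    · obtain ⟨L, rfl⟩ : ∃ L', L = L' + 2 := ⟨L - 2, by omega⟩
      exact (ih L (by omega) (by omega)).add_two

theorem forall_isFactorOf_reverse_ne_iff (a : ℕ → ℕ) (l : ℕ) :
    (∀ w : List ℕ, IsFactorOf a w → l ≤ w.length → w.reverse ≠ w) ↔
      HasNoPalindromeOfLength a l ∧ HasNoPalindromeOfLength a (l + 1) := by
  refine ⟨fun h => ⟨fun i => ?_, fun i => ?_⟩, fun ⟨h₀, h₁⟩ w ⟨i, hi⟩ hl => ?_⟩
  · exact h _ ⟨i, by rw [length_factorAt]⟩ (by rw [length_factorAt])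
  · exact h _ ⟨i, by rw [length_factorAt]⟩ (by rw [length_factorAt]; omega)
  · rw [hi]
    exact hasNoPalindromeOfLength_of_le hl h₀ h₁ i

end Palindromes

def noPalindromeBelow (k : ℕ) (trans : List (List ℕ)) (q0 : ℕ) (out : List ℕ) (L : ℕ) : Bool :=
  decide (∀ i < k ^ stateBound trans L,
    (factorAt (dfaoSeq k trans q0 out) i L).reverse ≠ factorAt (dfaoSeq k trans q0 out) i L)

theorem dfaoGenerates.hasNoPalindromeOfLength_iff {k q0 : ℕ} {trans : List (List ℕ)}
    {out : List ℕ} {a : ℕ → ℕ} (hk : 2 ≤ k) (h : dfaoGenerates k trans q0 out a) (L : ℕ) :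
    HasNoPalindromeOfLength a L ↔ noPalindromeBelow k trans q0 out L = true := by
  obtain rfl := h.eq_dfaoSeq hk
  rw [noPalindromeBelow, decide_eq_true_iff]
  refine ⟨fun hL i _ => hL i, fun hL i => ?_⟩
  obtain ⟨i', hi', heq⟩ := h.exists_lt_factorAt_eq hk i L
  rw [← heq]
  exact hL i' hi'

def palindromeDecider : ℕ × List (List ℕ) × ℕ × List ℕ × ℕ → Bool
  | (k, t, q0, out, l) => noPalindromeBelow k t q0 out l && noPalindromeBelow k t q0 out (l + 1)

section Computability

open Primrec

variable {α : Type*} [Primcodable α]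

theorem Primrec.nat_pow : Primrec₂ ((· ^ ·) : ℕ → ℕ → ℕ) :=
  Primrec₂.unpaired'.1 Nat.Primrec.pow

theorem Primrec.dfaoStep {trans : α → List (List ℕ)} {q d : α → ℕ}
    (ht : Primrec trans) (hq : Primrec q) (hd : Primrec d) :
    Primrec fun x => _root_.dfaoStep (trans x) (q x) (d x) :=
  (list_getD 0).comp ((list_getD []).comp ht hq) hd

theorem Primrec.dfaoRun {trans : α → List (List ℕ)} {q : α → ℕ} {w : α → List ℕ}
    (ht : Primrec trans) (hq : Primrec q) (hw : Primrec w) :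
    Primrec fun x => _root_.dfaoRun (trans x) (q x) (w x) := by
  simp only [dfaoRun_eq_foldl]
  exact list_foldl hw hq ((ht.comp fst).dfaoStep (fst.comp snd) (snd.comp snd)).to₂

theorem Primrec.dfaoSeq {k q0 n : α → ℕ} {trans : α → List (List ℕ)} {out : α → List ℕ}
    (hk : Primrec k) (ht : Primrec trans) (hq : Primrec q0) (ho : Primrec out) (hn : Primrec n) :
    Primrec fun x => _root_.dfaoSeq (k x) (trans x) (q0 x) (out x) (n x) := by
  have hdigit : Primrec₂ fun x m => n x / k x ^ m % k x :=
    nat_mod.comp (nat_div.comp (hn.comp fst) (nat_pow.comp (hk.comp fst) snd)) (hk.comp fst)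
  exact (list_getD 0).comp ho (ht.dfaoRun hq (list_map (list_range.comp hn) hdigit))

theorem Primrec.factorAt {b : α → ℕ → ℕ} {i L : α → ℕ} (hb : Primrec₂ b) (hi : Primrec i)
    (hL : Primrec L) : Primrec fun x => _root_.factorAt (b x) (i x) (L x) :=
  list_map (list_range.comp hL) (hb.comp fst (nat_add.comp (hi.comp fst) snd)).to₂

theorem Primrec.stateBound {trans : α → List (List ℕ)} {L : α → ℕ} (ht : Primrec trans)
    (hL : Primrec L) : Primrec fun x => _root_.stateBound (trans x) (L x) :=
  nat_pow.comp
    (nat_mul.comp (nat_add.comp (list_length.comp (list_flatten.comp ht)) (const 2)) hL) hL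

theorem Primrec.noPalindromeBelow {k q0 L : α → ℕ} {trans : α → List (List ℕ)}
    {out : α → List ℕ} (hk : Primrec k) (ht : Primrec trans) (hq : Primrec q0)
    (ho : Primrec out) (hL : Primrec L) :
    Primrec fun x => _root_.noPalindromeBelow (k x) (trans x) (q0 x) (out x) (L x) := by
  have hseq : Primrec₂ fun (p : ℕ × α) n =>
      _root_.dfaoSeq (k p.2) (trans p.2) (q0 p.2) (out p.2) n :=
    (hk.comp (snd.comp fst)).dfaoSeq (ht.comp (snd.comp fst)) (hq.comp (snd.comp fst))
      (ho.comp (snd.comp fst)) snd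
  have hfactor : Primrec fun p : ℕ × α =>
      _root_.factorAt (_root_.dfaoSeq (k p.2) (trans p.2) (q0 p.2) (out p.2)) p.1 (L p.2) :=
    Primrec.factorAt hseq fst (hL.comp snd)
  have hpal : PrimrecRel fun i x =>
      (_root_.factorAt (_root_.dfaoSeq (k x) (trans x) (q0 x) (out x)) i (L x)).reverse ≠
        _root_.factorAt (_root_.dfaoSeq (k x) (trans x) (q0 x) (out x)) i (L x) :=
    (Primrec.eq.comp (list_reverse.comp hfactor) hfactor).not
  have hbound : Primrec fun x => k x ^ _root_.stateBound (trans x) (L x) :=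
    nat_pow.comp hk (ht.stateBound hL)
  exact ((hpal.forall_mem_list.comp (list_range.comp hbound) Primrec.id).of_eq
    fun _ => by simp only [mem_range, id]).decide

theorem primrec_palindromeDecider : Primrec palindromeDecider := by
  have hk : Primrec fun x : ℕ × List (List ℕ) × ℕ × List ℕ × ℕ => x.1 := fst
  have ht : Primrec fun x : ℕ × List (List ℕ) × ℕ × List ℕ × ℕ => x.2.1 := fst.comp snd
  have hq : Primrec fun x : ℕ × List (List ℕ) × ℕ × List ℕ × ℕ => x.2.2.1 :=
    fst.comp (snd.comp snd)
  have ho : Primrec fun x : ℕ × List (List ℕ) × ℕ × List ℕ × ℕ => x.2.2.2.1 :=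
    fst.comp (snd.comp (snd.comp snd))
  have hl : Primrec fun x : ℕ × List (List ℕ) × ℕ × List ℕ × ℕ => x.2.2.2.2 :=
    snd.comp (snd.comp (snd.comp snd))
  exact (Primrec.and.comp (hk.noPalindromeBelow ht hq ho hl)
    (hk.noPalindromeBelow ht hq ho (succ.comp hl))).of_eq fun _ => rfl

end Computability

/-- It is decidable, given `k ≥ 2`, a DFAO generating a `k`-automatic sequence
`a`, and a length `l ≥ 1`, whether no factor of `a` of length `≥ l` is a
palindrome. -/
theorem avoidsLongPalindromes_decidable :
    ∃ f : ℕ × List (List ℕ) × ℕ × List ℕ × ℕ → Bool,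
      Computable f ∧
      ∀ (k : ℕ) (trans : List (List ℕ)) (q0 : ℕ) (out : List ℕ) (a : ℕ → ℕ)
        (l : ℕ),
        2 ≤ k → dfaoGenerates k trans q0 out a → 1 ≤ l →
        (f (k, trans, q0, out, l) = true ↔
          ∀ w : List ℕ, IsFactorOf a w → l ≤ w.length → w.reverse ≠ w) := by
  refine ⟨palindromeDecider, primrec_palindromeDecider.to_comp,
    fun k trans q0 out a l hk h _ => ?_⟩
  rw [forall_isFactorOf_reverse_ne_iff, h.hasNoPalindromeOfLength_iff hk,
    h.hasNoPalindromeOfLength_iff hk]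
  exact Bool.and_eq_true_iff
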